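/- arXiv:1707.09943 — 2 statements merged into one kernel-verified Lean document; each statement's English description precedes it below -/
import Mathlib

section
/- The Numerov coefficients α = 2 − h₊²/(h·h̄) and β = 2 − h²/(h₊·h̄) (with h̄ = (h+h₊)/2) are both nonnegative if and only if 2/(√5 + 1) ≤ h₊/h ≤ (√5 + 1)/2. -/
theorem numerov_offdiag_nonneg_iff (h hp : ℝ) (hh : 0 < h) (hhp : 0 < hp) :
    (0 ≤ 2 - hp^2 / (h * ((h + hp)/2)) ∧ 0 ≤ 2 - h^2 / (hp * ((h + hp)/2))) ↔
    (2 / (Real.sqrt 5 + 1) ≤ hp / h ∧ hp / h ≤ (Real.sqrt 5 + 1) / 2) := by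
  have hs : Real.sqrt 5 ^ 2 = 5 := Real.sq_sqrt (by norm_num)
  have hs1 : 1 < Real.sqrt 5 := by nlinarith [Real.sqrt_nonneg 5]
  have hd : 0 < h * ((h + hp)/2) := by positivity
  have hd2 : 0 < hp * ((h + hp)/2) := by positivity
  rw [sub_nonneg, sub_nonneg, div_le_iff₀ hd, div_le_iff₀ hd2,
      div_le_div_iff₀ (by positivity) hh, div_le_div_iff₀ hh (by norm_num : (0:ℝ) < 2)]
  constructor
  · rintro ⟨h1, h2⟩
    constructor
    · have hc : 0 < 2*h + hp*(Real.sqrt 5 - 1) := by nlinarith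
      nlinarith [mul_pos hh hhp]
    · have hc : 0 < 2*hp + h*(Real.sqrt 5 - 1) := by nlinarith
      nlinarith [mul_pos hh hhp]
  · rintro ⟨h1, h2⟩
    constructor
    · nlinarith [mul_pos hh hhp, sq_nonneg h, sq_nonneg hp]
    · nlinarith [mul_pos hh hhp, sq_nonneg h, sq_nonneg hp]
end

section
/- Let ω̄_h⁰ be a mesh on [0,X] with J₀ nodes intervals and let {λ⁰, w} be an eigenpair of the generalized eigenvalue problem −∂̂_x ∂̄_x w = λ⁰ s_N w on ω̄_h⁰. For K ≥ 1, construct the mesh ω̄_h^{0,K} on [0,X] by tiling [0,X] with K copies of the 1/K-scaled mesh ω̄_h⁰, where odd-numbered copies are reflected: nodes x_{2kJ₀+l} = 2kX/K + x_l⁰/K (0 ≤ l ≤ J₀−1, 0 ≤ 2k < K) and x_{(2k−1)J₀+l} = 2kX/K − x_{J₀−l}⁰/K (0 ≤ l ≤ J₀−1, 1 ≤ 2k−1 < K), x_J = X with J = J₀K. Define Π_K w by (Π_K w)_{2kJ₀+l} = w_l and (Π_K w)_{(2k−1)J₀+l} = −w_{J₀−l}. Then {λ⁰K², Π_K w} is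 an eigenpair of the generalized eigenvalue problem on ω̄_h^{0,K}. -/
/-! Rescaling a mesh by `1/K` multiplies `-∂̂_x ∂̄_x` by `K²` and leaves the Numerov weights of
`s_N` unchanged, and reflecting mesh and mesh function (the latter with a sign change) maps an
eigenpair to an eigenpair; so at the nodes inside each copy of the base mesh, `Π_K w` satisfies
the equation with eigenvalue `λ⁰ K²`. At a junction node the two neighbouring steps are equal and
`Π_K w` vanishes there and is odd about it, so both sides of the equation are zero. -/

/-- Steps of a mesh given by its nodes `x`. -/
noncomputable def step (x : ℕ → ℝ) (j : ℕ) : ℝ := x j - x (j-1)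

/-- Discrete Laplacian on the non-uniform mesh with nodes `x`. -/
noncomputable def lap (x : ℕ → ℝ) (W : ℕ → ℂ) (j : ℕ) : ℂ :=
  ((W (j+1) - W j) / (step x (j+1) : ℂ) - (W j - W (j-1)) / (step x j : ℂ))
    / (((step x j + step x (j+1))/2 : ℝ) : ℂ)

/-- Numerov averaging operator on the non-uniform mesh with nodes `x`. -/
noncomputable def sN (x : ℕ → ℝ) (W : ℕ → ℂ) (j : ℕ) : ℂ :=
  (1/12 : ℂ) * ((2 - (step x (j+1))^2 / (step x j * ((step x j + step x (j+1))/2)) : ℝ) : ℂ) * W (j-1)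
  + (5/6 : ℂ) * ((1 + (step x (j+1) - step x j)^2 / (5 * step x j * step x (j+1)) : ℝ) : ℂ) * W j
  + (1/12 : ℂ) * ((2 - (step x j)^2 / (step x (j+1) * ((step x j + step x (j+1))/2)) : ℝ) : ℂ) * W (j+1)

/-- Nodes of the mesh `ω̄_h^{0,K}`: `K` scaled copies of the base mesh, odd copies reflected. -/
noncomputable def tiledMesh (X : ℝ) (J₀ K : ℕ) (x0 : ℕ → ℝ) (j : ℕ) : ℝ :=
  if (j / J₀) % 2 = 0 then ((j / J₀ : ℕ) : ℝ) * X / K + x0 (j % J₀) / K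
  else (((j / J₀ : ℕ) : ℝ) + 1) * X / K - x0 (J₀ - j % J₀) / K

/-- The extension operator `Π_K`. -/
def PiK (J₀ : ℕ) (w : ℕ → ℂ) (j : ℕ) : ℂ :=
  if (j / J₀) % 2 = 0 then w (j % J₀) else -w (J₀ - j % J₀)

noncomputable def lapStencil (a b : ℝ) (u v w : ℂ) : ℂ :=
  ((w - v) / (b : ℂ) - (v - u) / (a : ℂ)) / (((a + b) / 2 : ℝ) : ℂ)

noncomputable def sNStencil (a b : ℝ) (u v w : ℂ) : ℂ :=
  (1/12 : ℂ) * ((2 - b^2 / (a * ((a + b) / 2)) : ℝ) : ℂ) * u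
  + (5/6 : ℂ) * ((1 + (b - a)^2 / (5 * a * b) : ℝ) : ℂ) * v
  + (1/12 : ℂ) * ((2 - a^2 / (b * ((a + b) / 2)) : ℝ) : ℂ) * w

def NumerovEq (lam : ℂ) (a b : ℝ) (u v w : ℂ) : Prop :=
  -lapStencil a b u v w = lam * sNStencil a b u v w

theorem lapStencil_div_div (a b k : ℝ) (u v w : ℂ) :
    lapStencil (a / k) (b / k) u v w = (k : ℂ) ^ 2 * lapStencil a b u v w := by
  simp only [lapStencil, ← add_div]
  push_cast
  simp only [div_div_eq_mul_div]
  ring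

theorem sNStencil_div_div {k : ℝ} (hk : k ≠ 0) (a b : ℝ) (u v w : ℂ) :
    sNStencil (a / k) (b / k) u v w = sNStencil a b u v w := by
  have hk2 : k ^ 2 ≠ 0 := pow_ne_zero 2 hk
  have hleft :
      (b / k) ^ 2 / (a / k * ((a / k + b / k) / 2)) = b ^ 2 / (a * ((a + b) / 2)) := by
    rw [show (a / k * ((a / k + b / k) / 2)) = a * ((a + b) / 2) / k ^ 2 by ring, div_pow,
      div_div_div_cancel_right₀ hk2]
  have hright :
      (a / k) ^ 2 / (b / k * ((a / k + b / k) / 2)) = a ^ 2 / (b * ((a + b) / 2)) := by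
    rw [show (b / k * ((a / k + b / k) / 2)) = b * ((a + b) / 2) / k ^ 2 by ring, div_pow,
      div_div_div_cancel_right₀ hk2]
  have hmid : (b / k - a / k) ^ 2 / (5 * (a / k) * (b / k)) = (b - a) ^ 2 / (5 * a * b) := by
    rw [show 5 * (a / k) * (b / k) = 5 * a * b / k ^ 2 by ring, ← sub_div, div_pow,
      div_div_div_cancel_right₀ hk2]
  simp only [sNStencil, hleft, hright, hmid]

theorem NumerovEq.div_div {lam : ℂ} {a b k : ℝ} {u v w : ℂ} (h : NumerovEq lam a b u v w)
    (hk : k ≠ 0) : NumerovEq (lam * (k : ℂ) ^ 2) (a / k) (b / k) u v w := by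
  unfold NumerovEq at h ⊢
  rw [lapStencil_div_div, sNStencil_div_div hk]
  linear_combination (k : ℂ) ^ 2 * h

theorem NumerovEq.reflect {lam : ℂ} {a b : ℝ} {u v w : ℂ} (h : NumerovEq lam a b u v w) :
    NumerovEq lam b a (-w) (-v) (-u) := by
  unfold NumerovEq lapStencil sNStencil at h ⊢
  rw [add_comm b a, show (a - b) ^ 2 = (b - a) ^ 2 by ring, show 5 * b * a = 5 * a * b by ring]
  linear_combination -h

theorem numerovEq_antisymm (lam : ℂ) (a : ℝ) (u : ℂ) : NumerovEq lam a a u 0 (-u) := by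
  unfold NumerovEq lapStencil sNStencil
  ring_nf

def IsEigenAt (lam : ℂ) (x : ℕ → ℝ) (W : ℕ → ℂ) (j : ℕ) : Prop :=
  -lap x W j = lam * sN x W j

theorem isEigenAt_iff_numerovEq {lam : ℂ} {x : ℕ → ℝ} {W : ℕ → ℂ} {j : ℕ} :
    IsEigenAt lam x W j ↔
      NumerovEq lam (step x j) (step x (j + 1)) (W (j - 1)) (W j) (W (j + 1)) :=
  Iff.rfl

theorem IsEigenAt.rescaled_copy {lam : ℂ} {x y : ℕ → ℝ} {W V : ℕ → ℂ} {n l : ℕ} {c k : ℝ}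
    (h : IsEigenAt lam y V l) (hk : k ≠ 0) (hl : 1 ≤ l)
    (hx : ∀ i, l - 1 ≤ i → i ≤ l + 1 → x (n + i) = c + y i / k)
    (hW : ∀ i, l - 1 ≤ i → i ≤ l + 1 → W (n + i) = V i) :
    IsEigenAt (lam * (k : ℂ) ^ 2) x W (n + l) := by
  have hstep : ∀ i, l ≤ i → i ≤ l + 1 → step x (n + i) = step y i / k := by
    intro i hi hi'
    rw [step, step, show n + i - 1 = n + (i - 1) by omega, hx i (by omega) hi',
      hx (i - 1) (by omega) (by omega)]
    ring
  rw [isEigenAt_iff_numerovEq] at h ⊢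
  rw [hstep l le_rfl (by omega), add_assoc, hstep (l + 1) (by omega) le_rfl,
    show n + l - 1 = n + (l - 1) by omega, hW _ le_rfl (by omega), hW _ (by omega) (by omega),
    hW _ (by omega) le_rfl]
  exact h.div_div hk

theorem IsEigenAt.reflect {lam : ℂ} {x : ℕ → ℝ} {W : ℕ → ℂ} {J l : ℕ}
    (h : IsEigenAt lam x W (J - l)) (hl : 1 ≤ l) (hlJ : l < J) :
    IsEigenAt lam (fun i => -x (J - i)) (fun i => -W (J - i)) l := by
  rw [isEigenAt_iff_numerovEq] at h ⊢
  have hstep : step (fun i => -x (J - i)) l = step x (J - l + 1) := by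
    simp only [step, show J - (l - 1) = J - l + 1 by omega, Nat.add_sub_cancel]
    ring
  have hstep' : step (fun i => -x (J - i)) (l + 1) = step x (J - l) := by
    simp only [step, show J - l = J - (l + 1) + 1 by omega, Nat.add_sub_cancel]
    ring
  rw [hstep, hstep', show J - (l - 1) = J - l + 1 by omega,
    show J - (l + 1) = J - l - 1 by omega]
  exact h.reflect

theorem isEigenAt_of_antisymm (lam : ℂ) {x : ℕ → ℝ} {W : ℕ → ℂ} {j : ℕ}
    (hx : step x (j + 1) = step x j) (hW : W (j + 1) = -W (j - 1)) (hW0 : W j = 0) :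
    IsEigenAt lam x W j := by
  rw [isEigenAt_iff_numerovEq, hx, hW, hW0]
  exact numerovEq_antisymm lam _ _

section Tiled

variable {X : ℝ} {J₀ K : ℕ} {x0 : ℕ → ℝ} {w : ℕ → ℂ} {q l : ℕ}

theorem tiledMesh_mul_add (hl : l < J₀) :
    tiledMesh X J₀ K x0 (J₀ * q + l) =
      if q % 2 = 0 then q * X / K + x0 l / K else (q + 1) * X / K - x0 (J₀ - l) / K := by
  rw [tiledMesh, Nat.mul_add_div (by omega), Nat.div_eq_of_lt hl, Nat.add_zero,
    Nat.mul_add_mod, Nat.mod_eq_of_lt hl]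

theorem PiK_mul_add (hl : l < J₀) :
    PiK J₀ w (J₀ * q + l) = if q % 2 = 0 then w l else -w (J₀ - l) := by
  rw [PiK, Nat.mul_add_div (by omega), Nat.div_eq_of_lt hl, Nat.add_zero,
    Nat.mul_add_mod, Nat.mod_eq_of_lt hl]

theorem tiledMesh_even_block (hJ₀ : 0 < J₀) (hx0J : x0 J₀ = X) (hq : Even q) (hl : l ≤ J₀) :
    tiledMesh X J₀ K x0 (J₀ * q + l) = q * X / K + x0 l / K := by
  obtain hl | hl := hl.lt_or_eq
  · rw [tiledMesh_mul_add hl, if_pos (Nat.even_iff.mp hq)]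
  · subst l
    rw [show J₀ * q + J₀ = J₀ * (q + 1) + 0 by ring,
      tiledMesh_mul_add hJ₀, if_neg (Nat.mod_two_ne_zero.mpr (Nat.odd_iff.mp hq.add_one)),
      Nat.sub_zero, hx0J]
    push_cast
    ring

theorem tiledMesh_odd_block (hJ₀ : 0 < J₀) (hx00 : x0 0 = 0) (hq : Odd q) (hl : l ≤ J₀) :
    tiledMesh X J₀ K x0 (J₀ * q + l) = (q + 1) * X / K + -x0 (J₀ - l) / K := by
  obtain hl | hl := hl.lt_or_eq
  · rw [tiledMesh_mul_add hl, if_neg (Nat.mod_two_ne_zero.mpr (Nat.odd_iff.mp hq))]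
    ring
  · subst l
    rw [show J₀ * q + J₀ = J₀ * (q + 1) + 0 by ring,
      tiledMesh_mul_add hJ₀, if_pos (Nat.even_iff.mp hq.add_one),
      Nat.sub_self, hx00]
    push_cast
    ring

theorem PiK_even_block (hJ₀ : 0 < J₀) (hwJ : w J₀ = 0) (hq : Even q) (hl : l ≤ J₀) :
    PiK J₀ w (J₀ * q + l) = w l := by
  obtain hl | hl := hl.lt_or_eq
  · rw [PiK_mul_add hl, if_pos (Nat.even_iff.mp hq)]
  · subst l
    rw [show J₀ * q + J₀ = J₀ * (q + 1) + 0 by ring,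
      PiK_mul_add hJ₀, if_neg (Nat.mod_two_ne_zero.mpr (Nat.odd_iff.mp hq.add_one)),
      Nat.sub_zero, hwJ, neg_zero]

theorem PiK_odd_block (hJ₀ : 0 < J₀) (hw0 : w 0 = 0) (hq : Odd q) (hl : l ≤ J₀) :
    PiK J₀ w (J₀ * q + l) = -w (J₀ - l) := by
  obtain hl | hl := hl.lt_or_eq
  · rw [PiK_mul_add hl, if_neg (Nat.mod_two_ne_zero.mpr (Nat.odd_iff.mp hq))]
  · subst l
    rw [show J₀ * q + J₀ = J₀ * (q + 1) + 0 by ring,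
      PiK_mul_add hJ₀, if_pos (Nat.even_iff.mp hq.add_one),
      Nat.sub_self, hw0, neg_zero]

theorem isEigenAt_tiledMesh_block {lam : ℂ} (hJ₀ : 0 < J₀) (hK : K ≠ 0) (hx00 : x0 0 = 0)
    (hx0J : x0 J₀ = X) (hw0 : w 0 = 0) (hwJ : w J₀ = 0)
    (heig : ∀ j, 1 ≤ j → j ≤ J₀ - 1 → IsEigenAt lam x0 w j) (hl1 : 1 ≤ l) (hl : l < J₀) :
    IsEigenAt (lam * (K : ℂ) ^ 2) (tiledMesh X J₀ K x0) (PiK J₀ w) (J₀ * q + l) := by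
  have hK' : (K : ℝ) ≠ 0 := Nat.cast_ne_zero.mpr hK
  rw [← Complex.ofReal_natCast]
  rcases Nat.even_or_odd q with hq | hq
  · exact (heig l hl1 (by omega)).rescaled_copy hK' hl1
      (fun i _ hi => tiledMesh_even_block hJ₀ hx0J hq (by omega))
      (fun i _ hi => PiK_even_block hJ₀ hwJ hq (by omega))
  · exact ((heig (J₀ - l) (by omega) (by omega)).reflect hl1 hl).rescaled_copy hK' hl1
      (fun i _ hi => tiledMesh_odd_block hJ₀ hx00 hq (by omega))
      (fun i _ hi => PiK_odd_block hJ₀ hw0 hq (by omega))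

theorem isEigenAt_tiledMesh_junction (lam : ℂ) (hJ₀ : 0 < J₀) (hx00 : x0 0 = 0)
    (hx0J : x0 J₀ = X) (hw0 : w 0 = 0) (hwJ : w J₀ = 0) (hq : 0 < q) :
    IsEigenAt lam (tiledMesh X J₀ K x0) (PiK J₀ w) (J₀ * q) := by
  obtain ⟨p, rfl⟩ := Nat.exists_eq_add_one.mpr hq
  have hprev : J₀ * p + J₀ - 1 = J₀ * p + (J₀ - 1) := by omega
  have hnext : J₀ * p + J₀ + 1 = J₀ * (p + 1) + 1 := by ring
  rw [mul_add_one]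
  rcases Nat.even_or_odd p with hp | hp
  · refine isEigenAt_of_antisymm lam ?_ ?_ ?_
    · simp only [step, Nat.add_sub_cancel, hprev]
      rw [hnext, tiledMesh_odd_block hJ₀ hx00 hp.add_one hJ₀,
        tiledMesh_even_block hJ₀ hx0J hp le_rfl,
        tiledMesh_even_block hJ₀ hx0J hp (Nat.sub_le J₀ 1), hx0J]
      push_cast
      ring
    · rw [hprev, hnext, PiK_odd_block hJ₀ hw0 hp.add_one hJ₀,
        PiK_even_block hJ₀ hwJ hp (Nat.sub_le J₀ 1)]
    · exact (PiK_even_block hJ₀ hwJ hp le_rfl).trans hwJ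
  · refine isEigenAt_of_antisymm lam ?_ ?_ ?_
    · simp only [step, Nat.add_sub_cancel, hprev]
      rw [hnext, tiledMesh_even_block hJ₀ hx0J hp.add_one hJ₀,
        tiledMesh_odd_block hJ₀ hx00 hp le_rfl,
        tiledMesh_odd_block hJ₀ hx00 hp (Nat.sub_le J₀ 1), Nat.sub_self, Nat.sub_sub_self hJ₀,
        hx00]
      push_cast
      ring
    · rw [hprev, hnext, PiK_even_block hJ₀ hwJ hp.add_one hJ₀,
        PiK_odd_block hJ₀ hw0 hp (Nat.sub_le J₀ 1), Nat.sub_sub_self hJ₀, neg_neg]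
    · rw [PiK_odd_block hJ₀ hw0 hp le_rfl, Nat.sub_self, hw0, neg_zero]

end Tiled

theorem tiled_eigenpair_general (X : ℝ) (J₀ K : ℕ) (hJ₀ : 2 ≤ J₀) (hK : 1 ≤ K)
    (x0 : ℕ → ℝ) (hx00 : x0 0 = 0) (hx0J : x0 J₀ = X)
    (w : ℕ → ℂ) (lam : ℂ)
    (hw0 : w 0 = 0) (hwJ : w J₀ = 0) (hwne : ∃ j ≤ J₀, w j ≠ 0)
    (heig : ∀ j, 1 ≤ j → j ≤ J₀ - 1 → -lap x0 w j = lam * sN x0 w j) :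
    PiK J₀ w 0 = 0 ∧ PiK J₀ w (J₀ * K) = 0 ∧
    (∃ j ≤ J₀ * K, PiK J₀ w j ≠ 0) ∧
    ∀ j, 1 ≤ j → j ≤ J₀ * K - 1 →
      -lap (tiledMesh X J₀ K x0) (PiK J₀ w) j
        = (lam * (K : ℂ)^2) * sN (tiledMesh X J₀ K x0) (PiK J₀ w) j := by
  have hJ₀' : 0 < J₀ := by omega
  refine ⟨by simp [PiK, hw0], by simp [PiK, Nat.mul_div_cancel_left _ hJ₀', hw0, hwJ], ?_, ?_⟩
  · obtain ⟨j, hj, hwj⟩ := hwne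
    have hjJ : j < J₀ := hj.lt_of_ne (by rintro rfl; exact hwj hwJ)
    refine ⟨j, hjJ.le.trans (Nat.le_mul_of_pos_right _ hK), ?_⟩
    simpa [PiK, Nat.div_eq_of_lt hjJ, Nat.mod_eq_of_lt hjJ] using hwj
  · intro j hj _
    rw [← Nat.div_add_mod j J₀]
    obtain hl | hl := (j % J₀).eq_zero_or_pos
    · have hq : 0 < j / J₀ := Nat.div_pos (Nat.le_of_dvd hj (Nat.dvd_of_mod_eq_zero hl)) hJ₀'
      rw [hl, add_zero]
      exact isEigenAt_tiledMesh_junction _ hJ₀' hx00 hx0J hw0 hwJ hq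
    · exact isEigenAt_tiledMesh_block hJ₀' (by omega) hx00 hx0J hw0 hwJ heig hl
        (Nat.mod_lt _ hJ₀')

theorem tiled_eigenpair (X : ℝ) (hX : 0 < X) (J₀ K : ℕ) (hJ₀ : 2 ≤ J₀) (hK : 1 ≤ K)
    (x0 : ℕ → ℝ) (hx00 : x0 0 = 0) (hx0J : x0 J₀ = X)
    (hmono : ∀ j < J₀, x0 j < x0 (j+1))
    (w : ℕ → ℂ) (lam : ℂ)
    (hw0 : w 0 = 0) (hwJ : w J₀ = 0) (hwne : ∃ j ≤ J₀, w j ≠ 0)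
    (heig : ∀ j, 1 ≤ j → j ≤ J₀ - 1 → -lap x0 w j = lam * sN x0 w j) :
    PiK J₀ w 0 = 0 ∧ PiK J₀ w (J₀ * K) = 0 ∧
    (∃ j ≤ J₀ * K, PiK J₀ w j ≠ 0) ∧
    ∀ j, 1 ≤ j → j ≤ J₀ * K - 1 →
      -lap (tiledMesh X J₀ K x0) (PiK J₀ w) j
        = (lam * (K : ℂ)^2) * sN (tiledMesh X J₀ K x0) (PiK J₀ w) j :=
  tiled_eigenpair_general X J₀ K hJ₀ hK x0 hx00 hx0J w lam hw0 hwJ hwne heig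
end
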